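/- Let g: [1,∞) → [0,∞) be monotone non-decreasing with g(2) ≥ 1, such that for every weakly dual systolic graph G of dimension d and every nonempty vertex set U of size s, φ_G(U) ≥ d − g(s). Then for every ε > 0, the function s ↦ g(2^{4/ε}) + ε·log₂ s has the same property. -/

import Mathlib

/-!
We model a finite `d`-regular graph with a proper edge `d`-coloring
(each vertex meets exactly one edge of each color) by giving, for every
color `i : Fin d`, a fixed-point-free involution `m i` on the vertices:
the color-`i` edges are the pairs `{v, m i v}`.
-/
structure EdgeColoredGraph (V : Type) (d : ℕ) where
  /-- `m i v` is the other endpoint of the unique color-`i` edge at `v`. -/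
  m : Fin d → V → V
  invol : ∀ i v, m i (m i v) = v
  ne : ∀ i v, m i v ≠ v

namespace EdgeColoredGraph

variable {V : Type} {d : ℕ}

/-- `G.ReachIn S u v` : `v` is reachable from `u` using only edges whose
color lies in `S`. -/
def ReachIn (G : EdgeColoredGraph V d) (S : Set (Fin d)) : V → V → Prop :=
  Relation.ReflTransGen (fun a b => ∃ i ∈ S, G.m i a = b)

/-- Color independence: for every color `i`, contracting all edges of
color `≠ i` produces no self-loop, i.e. no color-`i` edge has its two
endpoints joined by a path avoiding color `i`. -/
def IsPseudoCube (G : EdgeColoredGraph V d) : Prop :=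
  ∀ (i : Fin d) (v : V), ¬ G.ReachIn {j | j ≠ i} v (G.m i v)

/-- `∂(U)`: the number of edges with exactly one endpoint in `U`
(each such edge is counted once, at its endpoint inside `U`). -/
def boundary [Fintype V] [DecidableEq V] (G : EdgeColoredGraph V d) (U : Finset V) : ℕ :=
  ∑ i : Fin d, (U.filter fun v => G.m i v ∉ U).card

end EdgeColoredGraph

namespace EdgeColoredGraph

variable {V : Type} {d : ℕ}

/-- The connected component of `v` in the graph obtained from `G` by deleting
all edges of the top color `d`. -/
def comp (G : EdgeColoredGraph V (d + 1)) (v : V) : Type :=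
  {u : V // G.ReachIn {i | i ≠ Fin.last d} v u}

/-- The (d-dimensional, edge `d`-colored) graph induced by `G` on the connected
component of `v` after deleting all edges of the top color. -/
def restrict (G : EdgeColoredGraph V (d + 1)) (v : V) : EdgeColoredGraph (G.comp v) d where
  m i u := ⟨G.m i.castSucc u.1,
    u.2.tail ⟨i.castSucc, (Fin.castSucc_lt_last i).ne, rfl⟩⟩
  invol i u := Subtype.ext (G.invol i.castSucc u.1)
  ne i u h := G.ne i.castSucc u.1 (congrArg Subtype.val h)

/-- A weak pseudo-cube: `d`-regular, properly edge `d`-colored, contracting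
all edges of color `≠ d` gives no self-loop, and every connected component of
the graph with the color-`d` edges deleted is a `(d-1)`-dimensional weak
pseudo-cube.  (For `d = 1` the conditions amount to a perfect matching, which
holds automatically in this encoding.) -/
def IsWeakPseudoCube : ∀ {d : ℕ} {V : Type}, EdgeColoredGraph V d → Prop
  | 0, _, _ => True
  | _ + 1, _, G =>
      (∀ v, ¬ G.ReachIn {i | i ≠ Fin.last _} v (G.m (Fin.last _) v)) ∧
      ∀ v, IsWeakPseudoCube (G.restrict v)

/-- A weakly dual systolic graph: a weak pseudo-cube such that the multigraph
obtained by contracting all edges of color `≠ d` is simple (between any two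
connected components of the color-`d`-deleted graph there is at most one
color-`d` edge), and every connected component of the color-`d`-deleted graph
is weakly dual systolic of dimension `d - 1`. -/
def IsWeaklyDualSystolic : ∀ {d : ℕ} {V : Type}, EdgeColoredGraph V d → Prop
  | 0, _, _ => True
  | _ + 1, _, G =>
      IsWeakPseudoCube G ∧
      (∀ a b, G.ReachIn {i | i ≠ Fin.last _} a b →
        G.ReachIn {i | i ≠ Fin.last _} (G.m (Fin.last _) a) (G.m (Fin.last _) b) → a = b) ∧
      ∀ v, IsWeaklyDualSystolic (G.restrict v)

end EdgeColoredGraph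

/-- `g` is a dimension-independent bounding function: for every weakly dual
systolic graph `G` of dimension `d` and every nonempty vertex set `U` of size
`s`, `φ_G(U) = ∂(U)/|U| ≥ d − g(s)`. -/
def IsBoundingFunction (g : ℝ → ℝ) : Prop :=
  ∀ (d : ℕ) (V : Type) (_ : Fintype V) (_ : DecidableEq V)
    (G : EdgeColoredGraph V d), G.IsWeaklyDualSystolic →
    ∀ U : Finset V, U.Nonempty →
      (G.boundary U : ℝ) / U.card ≥ d - g U.card

/-!
Induct on the dimension. Sets of size at most `K = 2^(4/ε)` are handled by `g` itself, as `g`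
is monotone. A larger set `U`, of size `s`, splits into pieces `U ∩ A` along the components `A`
of the graph with the top color deleted, and the induction hypothesis gives each piece of size
`n` at least `n (d - g K - ε log₂ n)` boundary edges of the lower colors. A top-colored edge is
missing from `∂U` only if it joins two pieces, and by simplicity at most one such edge joins
any two components. Charged to its endpoint in the smaller piece, these edges put at most
`min n j` charges on a piece of size `n` with `j` other pieces at least as large, where
`(j + 1) n ≤ s`; once `s ≥ K` an elementary estimate gives `2 min n j ≤ ε n log₂ (s / n)`.
Since `log₂ n + log₂ (s / n) = log₂ s`, summing over the pieces gives the claim.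
-/

open Finset Real

theorem two_mul_le_two_rpow {t : ℝ} (ht : 2 ≤ t) : 2 * t ≤ (2 : ℝ) ^ t := by
  have hlog : 1 / 2 < log 2 := by linarith [log_two_gt_d9]
  calc 2 * t ≤ 4 * (log 2 * (t - 2) + 1) := by nlinarith
    _ ≤ 4 * exp (log 2 * (t - 2)) := by gcongr; exact add_one_le_exp _
    _ = 2 ^ t := by rw [← rpow_def_of_pos two_pos, rpow_sub two_pos]; norm_num; ring

theorem two_mul_min_le_mul_logb {ε n s : ℝ} {j : ℕ} (hε : 0 < ε) (hn : 0 < n)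
    (hjs : (j + 1) * n ≤ s) (hs : (2 : ℝ) ^ (4 / ε) ≤ s) :
    2 * min n j ≤ ε * (n * logb 2 (s / n)) := by
  set x := s / n
  have hxn : x * n = s := by simp only [x]; field_simp
  rcases j.eq_zero_or_pos with rfl | hj
  · have : 1 ≤ x := (le_div_iff₀ hn).2 (by simpa using hjs)
    simpa [hn.le] using mul_nonneg hε.le (mul_nonneg hn.le (logb_nonneg one_lt_two this))
  replace hj : (1 : ℝ) ≤ j := by exact_mod_cast hj
  have hjx : j + 1 ≤ x := (le_div_iff₀ hn).2 hjs
  have hx : 0 < x := by linarith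
  set L := logb 2 x
  have hL : 1 ≤ L := by
    rw [le_logb_iff_rpow_le one_lt_two hx, rpow_one]; linarith
  rcases le_or_gt 2 (ε * L) with hbig | hsmall
  · nlinarith [min_le_left n j]
  -- With `u = ε log₂ x < 2`, the claim `2 j ≤ u n` follows from `2 x² ≤ u s`,
  -- which reduces to `2 t ≤ 2 ^ t` for `t = 4 / u`.
  set u := ε * L with hu_def
  have hu : 0 < u := by positivity
  have ht : 2 ≤ 4 / u := by rw [le_div_iff₀ hu]; linarith
  have hexp : 2 * L + (4 / u - 2) ≤ 4 / ε := by
    have : 4 / ε = 4 / u * L := by rw [hu_def]; field_simp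
    nlinarith
  have hsplit : (2 : ℝ) ^ (2 * L + (4 / u - 2)) = x ^ 2 * 2 ^ (4 / u) / 4 := by
    rw [rpow_add two_pos, rpow_sub two_pos, mul_comm 2 L, rpow_mul two_pos.le,
      rpow_logb two_pos one_lt_two.ne' hx]
    norm_num; ring
  have h8 : 8 ≤ u * 2 ^ (4 / u) :=
    calc (8 : ℝ) = u * (2 * (4 / u)) := by field_simp; ring
      _ ≤ u * 2 ^ (4 / u) := by gcongr; exact two_mul_le_two_rpow ht
  have hx_sq : 2 * x ^ 2 ≤ u * s := by
    have := rpow_le_rpow_of_exponent_le one_le_two hexp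
    rw [hsplit] at this
    nlinarith [sq_nonneg x]
  have : 2 * j ≤ u * n := by nlinarith
  nlinarith [min_le_right n j]

section Matching

variable {α β : Type*} [DecidableEq β]

theorem card_filter_le_card_fiber_mul_le_card (U : Finset α) (c : α → β) (b : β) :
    #{b' ∈ U.image c | #{v ∈ U | c v = b} ≤ #{v ∈ U | c v = b'}} * #{v ∈ U | c v = b} ≤
      #U :=
  calc _ ≤ ∑ b' ∈ U.image c with #{v ∈ U | c v = b} ≤ #{v ∈ U | c v = b'},
        #{v ∈ U | c v = b'} := card_nsmul_le_sum _ _ _ fun _ hb' => (mem_filter.1 hb').2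
    _ ≤ ∑ b' ∈ U.image c, #{v ∈ U | c v = b'} := sum_le_sum_of_subset (filter_subset _ _)
    _ = #U := (card_eq_sum_card_image c U).symm

theorem card_filter_eq_pos_of_mem_image {U : Finset α} {c : α → β} {b : β}
    (hb : b ∈ U.image c) : 0 < #{v ∈ U | c v = b} := by
  obtain ⟨v, hv, rfl⟩ := mem_image.1 hb
  exact card_pos.2 ⟨v, mem_filter.2 ⟨hv, rfl⟩⟩

/-- Charge each `m`-edge inside `U` to its endpoint in the smaller `c`-class: a class of size `n`
with `j` other classes at least as large is charged at most `min n j` times (at most once per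
vertex, and by `hinj` at most once per other class), and `(j + 1) n ≤ #U`. -/
theorem card_filter_mem_le_sum_image [DecidableEq α] (U : Finset α) {m : α → α}
    (hm : Function.Involutive m) (c : α → β) (hc : ∀ v, c (m v) ≠ c v)
    (hinj : ∀ v w, c v = c w → c (m v) = c (m w) → v = w) (F : ℕ → ℝ)
    (hF : ∀ n j : ℕ, 0 < n → (j + 1) * n ≤ #U → ((2 * min n j : ℕ) : ℝ) ≤ F n) :
    (#{v ∈ U | m v ∈ U} : ℝ) ≤ ∑ b ∈ U.image c, F #{v ∈ U | c v = b} := by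
  set n : β → ℕ := fun b => #{v ∈ U | c v = b}
  set P := {v ∈ U | m v ∈ U ∧ n (c v) ≤ n (c (m v))}
  have hQP : #{v ∈ U | m v ∈ U} ≤ 2 * #P := by
    have hcover : {v ∈ U | m v ∈ U} ⊆ P ∪ P.image m := by
      intro v hv
      obtain ⟨hvU, hmv⟩ := mem_filter.1 hv
      rcases le_total (n (c v)) (n (c (m v))) with h | h
      · exact mem_union_left _ (mem_filter.2 ⟨hvU, hmv, h⟩)
      · refine mem_union_right _ (mem_image.2 ⟨m v, mem_filter.2 ⟨hmv, ?_, ?_⟩, hm v⟩) <;>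
          rwa [hm v]
    calc _ ≤ #(P ∪ P.image m) := card_le_card hcover
      _ ≤ #P + #(P.image m) := card_union_le _ _
      _ ≤ 2 * #P := by linarith [card_image_le (s := P) (f := m)]
  have hfiber : ∀ b ∈ U.image c,
      #{v ∈ P | c v = b} ≤ min (n b) #({b' ∈ U.image c | n b ≤ n b'}.erase b) := by
    intro b hb
    refine le_min (card_le_card (filter_subset_filter _ (filter_subset _ _))) ?_
    refine card_le_card_of_injOn (fun v => c (m v)) (fun v hv => ?_) (fun v hv w hw hvw => ?_)
    · simp only [mem_coe, P, mem_filter] at hv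
      obtain ⟨⟨hvU, hmv, hle⟩, rfl⟩ := hv
      exact mem_erase.2 ⟨hc v, mem_filter.2 ⟨mem_image_of_mem c hmv, hle⟩⟩
    · simp only [mem_coe, mem_filter] at hv hw
      exact hinj v w (hv.2.trans hw.2.symm) hvw
  have hrank : ∀ b ∈ U.image c,
      (#({b' ∈ U.image c | n b ≤ n b'}.erase b) + 1) * n b ≤ #U := by
    intro b hb
    rw [card_erase_add_one (mem_filter.2 ⟨hb, le_refl (n b)⟩)]
    exact card_filter_le_card_fiber_mul_le_card U c b
  have hPsum : #P = ∑ b ∈ U.image c, #{v ∈ P | c v = b} :=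
    card_eq_sum_card_fiberwise fun v hv => mem_image_of_mem c (mem_filter.1 hv).1
  calc (#{v ∈ U | m v ∈ U} : ℝ) ≤ ((2 * #P : ℕ) : ℝ) := by exact_mod_cast hQP
    _ = ∑ b ∈ U.image c, ((2 * #{v ∈ P | c v = b} : ℕ) : ℝ) := by
      rw [hPsum, mul_sum]; push_cast; rfl
    _ ≤ ∑ b ∈ U.image c, F (n b) := sum_le_sum fun b hb =>
      le_trans (by gcongr; exact hfiber b hb)
        (hF _ _ (card_filter_eq_pos_of_mem_image hb) (hrank b hb))

end Matching

def IsBoundingFunctionInDim (d : ℕ) (g : ℝ → ℝ) : Prop :=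
  ∀ (V : Type) (_ : Fintype V) (_ : DecidableEq V) (G : EdgeColoredGraph V d),
    G.IsWeaklyDualSystolic →
      ∀ U : Finset V, U.Nonempty → (G.boundary U : ℝ) / U.card ≥ d - g U.card

theorem isBoundingFunctionInDim_zero {g : ℝ → ℝ} (hg : ∀ s, 1 ≤ s → 0 ≤ g s) :
    IsBoundingFunctionInDim 0 g := by
  intro V _ _ G _ U hU
  simp only [EdgeColoredGraph.boundary, univ_eq_empty, sum_empty, CharP.cast_eq_zero, zero_div,
    zero_sub, ge_iff_le, neg_nonpos]
  exact hg _ (by exact_mod_cast hU.card_pos)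

namespace EdgeColoredGraph

variable {V : Type} {d : ℕ}

theorem reachIn_symm (G : EdgeColoredGraph V d) {S : Set (Fin d)} {a b : V}
    (h : G.ReachIn S a b) : G.ReachIn S b a := by
  induction h with
  | refl => exact .refl
  | tail _ hstep ih =>
    obtain ⟨i, hi, rfl⟩ := hstep
    exact ih.head ⟨i, hi, G.invol i _⟩

theorem reachIn_eq_iff (G : EdgeColoredGraph V d) {S : Set (Fin d)} {a b : V} :
    G.ReachIn S a = G.ReachIn S b ↔ G.ReachIn S a b := by
  refine ⟨fun h => h ▸ .refl, fun h => funext fun u => propext ?_⟩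
  exact ⟨(G.reachIn_symm h).trans, h.trans⟩

theorem boundary_restrict [DecidableEq V] (G : EdgeColoredGraph V (d + 1)) (w : V)
    [Fintype (G.comp w)] [DecidableEq (G.comp w)]
    [DecidablePred (G.ReachIn {i | i ≠ Fin.last d} w)] (U : Finset V) :
    (G.restrict w).boundary {u | u.1 ∈ U} =
      ∑ i : Fin d,
        #{v ∈ U | G.ReachIn {i | i ≠ Fin.last d} w v ∧ G.m i.castSucc v ∉ U} := by
  refine sum_congr rfl fun i _ => ?_
  refine card_bij (fun u _ => u.1) (fun u hu => ?_) (fun _ _ _ _ => Subtype.ext) fun v hv => ?_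
  · simp only [mem_filter, mem_univ, true_and] at hu
    exact mem_filter.2 ⟨hu.1, u.2, hu.2⟩
  · obtain ⟨hvU, hwv, hmv⟩ := mem_filter.1 hv
    refine ⟨⟨v, hwv⟩, mem_filter.2 ⟨mem_filter.2 ⟨mem_univ _, hvU⟩, fun h => hmv ?_⟩,
      rfl⟩
    exact (mem_filter.1 h).2

theorem card_filter_val_mem [DecidableEq V] (G : EdgeColoredGraph V (d + 1)) (w : V)
    [Fintype (G.comp w)] [DecidablePred (G.ReachIn {i | i ≠ Fin.last d} w)] (U : Finset V) :
    #{u : G.comp w | u.1 ∈ U} = #{v ∈ U | G.ReachIn {i | i ≠ Fin.last d} w v} := by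
  refine card_bij (fun u _ => u.1) (fun u hu => ?_) (fun _ _ _ _ => Subtype.ext) fun v hv => ?_
  · simp only [mem_filter, mem_univ, true_and] at hu
    exact mem_filter.2 ⟨hu, u.2⟩
  · obtain ⟨hvU, hwv⟩ := mem_filter.1 hv
    exact ⟨⟨v, hwv⟩, mem_filter.2 ⟨mem_univ _, hvU⟩, rfl⟩

theorem boundary_add_card_filter_mem [Fintype V] [DecidableEq V] {β : Type*} [DecidableEq β]
    (G : EdgeColoredGraph V (d + 1)) (U : Finset V) (c : V → β) :
    G.boundary U + #{v ∈ U | G.m (Fin.last d) v ∈ U} =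
      ∑ b ∈ U.image c, ∑ i : Fin d, #{v ∈ U | c v = b ∧ G.m i.castSucc v ∉ U} + #U := by
  rw [boundary, Fin.sum_univ_castSucc, add_assoc, add_comm #{v ∈ U | _ ∉ U},
    card_filter_add_card_filter_not, sum_comm]
  congr 1
  refine sum_congr rfl fun i _ => ?_
  rw [card_eq_sum_card_fiberwise fun v hv => mem_image_of_mem c (mem_filter.1 hv).1]
  simp only [filter_filter, and_comm]

theorem card_mul_le_of_isBoundingFunctionInDim [Fintype V] [DecidableEq V] {g : ℝ → ℝ}
    (hg : IsBoundingFunctionInDim d g) (G : EdgeColoredGraph V (d + 1))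
    (hG : ∀ w, (G.restrict w).IsWeaklyDualSystolic) {U : Finset V} {w : V}
    [DecidablePred (G.ReachIn {i | i ≠ Fin.last d} w)] (hw : w ∈ U) :
    (#{v ∈ U | G.ReachIn {i | i ≠ Fin.last d} w v} : ℝ) *
        (d - g (#{v ∈ U | G.ReachIn {i | i ≠ Fin.last d} w v})) ≤
      ∑ i : Fin d,
        #{v ∈ U | G.ReachIn {i | i ≠ Fin.last d} w v ∧ G.m i.castSucc v ∉ U} := by
  let : Fintype (G.comp w) := Subtype.fintype _
  let : DecidableEq (G.comp w) := Subtype.instDecidableEq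
  have hne : ({u | u.1 ∈ U} : Finset (G.comp w)).Nonempty :=
    ⟨⟨w, .refl⟩, mem_filter.2 ⟨mem_univ _, hw⟩⟩
  have := hg _ inferInstance inferInstance _ (hG w) _ hne
  rw [ge_iff_le, le_div_iff₀ (by exact_mod_cast card_pos.2 hne), boundary_restrict,
    card_filter_val_mem] at this
  linarith

theorem boundary_div_card_ge_of_two_rpow_le [Fintype V] [DecidableEq V] {C ε : ℝ} (hε : 0 < ε)
    (ih : IsBoundingFunctionInDim d fun s => C + ε * logb 2 s)
    (G : EdgeColoredGraph V (d + 1)) (hG : G.IsWeaklyDualSystolic) {U : Finset V}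
    (hU : (2 : ℝ) ^ (4 / ε) ≤ #U) :
    (G.boundary U : ℝ) / #U ≥ ((d + 1 : ℕ) : ℝ) - (C + ε * logb 2 #U) := by
  classical
  obtain ⟨⟨htop, -⟩, hsimple, hcomp⟩ := hG
  set c := G.ReachIn {i | i ≠ Fin.last d}
  have hc_eq : ∀ v w, c v = c w ↔ c w v := fun v w =>
    G.reachIn_eq_iff.trans ⟨G.reachIn_symm, G.reachIn_symm⟩
  set n : (V → Prop) → ℕ := fun b => #{v ∈ U | c v = b}
  have hs : (0 : ℝ) < #U := lt_of_lt_of_le (by positivity) hU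
  have hinner : ∀ b ∈ U.image c, (n b : ℝ) * (d - (C + ε * logb 2 (n b))) ≤
      ∑ i : Fin d, #{v ∈ U | c v = b ∧ G.m i.castSucc v ∉ U} := by
    intro b hb
    obtain ⟨w, hw, rfl⟩ := mem_image.1 hb
    simpa only [n, hc_eq] using card_mul_le_of_isBoundingFunctionInDim ih G hcomp hw
  set F : ℕ → ℝ := fun k => ε * (k * logb 2 (#U / k))
  have hF : ∀ k j : ℕ, 0 < k → (j + 1) * k ≤ #U →
      ((2 * min k j : ℕ) : ℝ) ≤ F k := by
    intro k j hk hjk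
    push_cast
    exact two_mul_min_le_mul_logb hε (by positivity) (by exact_mod_cast hjk) hU
  have hmatch := card_filter_mem_le_sum_image U (G.invol (Fin.last d)) c
    (fun v h => htop v (G.reachIn_symm ((hc_eq _ _).1 h.symm)))
    (fun v w h h' => hsimple v w ((hc_eq _ _).1 h.symm) ((hc_eq _ _).1 h'.symm)) F hF
  have hdecomp := congrArg (Nat.cast : ℕ → ℝ) (G.boundary_add_card_filter_mem U c)
  push_cast at hdecomp
  have hsum : ∑ b ∈ U.image c, ((n b : ℝ) * (d - (C + ε * logb 2 (n b))) - F (n b)) =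
      #U * (d - (C + ε * logb 2 #U)) := by
    have hcard : (#U : ℝ) = ∑ b ∈ U.image c, (n b : ℝ) := by
      rw [card_eq_sum_card_image c U]; push_cast; rfl
    nth_rw 1 [hcard]
    rw [sum_mul]
    refine sum_congr rfl fun b hb => ?_
    have hnb : (n b : ℝ) ≠ 0 := Nat.cast_ne_zero.2 (card_filter_eq_pos_of_mem_image hb).ne'
    simp only [F, logb_div hs.ne' hnb]
    ring
  have hinner_sum := sum_le_sum hinner
  push_cast at hinner_sum
  rw [sum_sub_distrib] at hsum
  rw [ge_iff_le, le_div_iff₀ hs]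
  push_cast
  linarith

end EdgeColoredGraph

theorem bootstrap_general (g : ℝ → ℝ) (hnonneg : ∀ s, 1 ≤ s → 0 ≤ g s)
    (hmono : ∀ x y, 1 ≤ x → x ≤ y → g x ≤ g y)
    (hg : IsBoundingFunction g) (ε : ℝ) (hε : 0 < ε) :
    IsBoundingFunction (fun s => g (2 ^ (4 / ε)) + ε * Real.logb 2 s) := by
  have hK : (1 : ℝ) ≤ 2 ^ (4 / ε) := one_le_rpow one_le_two (by positivity)
  show ∀ d, IsBoundingFunctionInDim d fun s => g (2 ^ (4 / ε)) + ε * logb 2 s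
  intro d
  induction d with
  | zero => exact isBoundingFunctionInDim_zero fun s hs =>
      add_nonneg (hnonneg _ hK) (mul_nonneg hε.le (logb_nonneg one_lt_two hs))
  | succ d ih =>
    intro V instFintype instDecEq G hG U hU
    rcases le_or_gt (#U : ℝ) (2 ^ (4 / ε)) with hsmall | hlarge
    · have hU1 : (1 : ℝ) ≤ #U := by exact_mod_cast hU.card_pos
      have hgU := hg (d + 1) V instFintype instDecEq G hG U hU
      have hgK := hmono _ _ hU1 hsmall
      have hlog := mul_nonneg hε.le (logb_nonneg one_lt_two hU1)
      simp only [ge_iff_le] at hgU ⊢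
      linarith
    · exact G.boundary_div_card_ge_of_two_rpow_le hε ih hG hlarge.le

/-- The bootstrapping lemma: if `g : [1,∞) → [0,∞)` is monotone
non-decreasing with `g(2) ≥ 1` and is a dimension-independent bounding
function, then for every `ε > 0` so is `s ↦ g(2^(4/ε)) + ε·log₂ s`. -/
theorem bootstrap (g : ℝ → ℝ) (hnonneg : ∀ s, 1 ≤ s → 0 ≤ g s)
    (hmono : ∀ x y, 1 ≤ x → x ≤ y → g x ≤ g y) (h2 : 1 ≤ g 2)
    (hg : IsBoundingFunction g) (ε : ℝ) (hε : 0 < ε) :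
    IsBoundingFunction (fun s => g (2 ^ (4 / ε)) + ε * Real.logb 2 s) :=
  bootstrap_general g hnonneg hmono hg ε hε
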